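/- arXiv:math/0309178 — 2 statements merged into one kernel-verified Lean document; each statement's English description precedes it below -/
import Mathlib

section
/- Let F = (F_γ)_{γ∈ℤ/pℤ} be a nearly holomorphic vector-valued modular form of weight k and type ρ with Fourier coefficients a(γ,n). Then: (i) F_γ = F_{-γ} for every γ ∈ ℤ/pℤ; (ii) setting c(n) := (1/2)·Σ_{γ∈ℤ/pℤ, αγ²≡n (mod p)} a(γ,n), one has F₀(τ) = 2·Σ_{n∈ℤ, n≡0 (mod p)} c(n)e(nτ/p), and F_γ(τ) = Σ_{n∈ℤ, n≡αγ² (mod p)} c(n)e(nτ/p) for every γ ≠ 0. (That is, F is recovered from the scalar form f = (1/2)Σ_γ F_γ(pτ) by the formulas of the main theorem, so the two assignments are mutually inverse isomorphisms.) -/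
open Complex

noncomputable def e (x : ℂ) : ℂ := Complex.exp (2 * Real.pi * Complex.I * x)

noncomputable def slashW (p : ℕ) (k : ℤ) (f : ℂ → ℂ) (τ : ℂ) : ℂ :=
  (((p:ℝ) ^ ((k:ℝ)/2) : ℝ) : ℂ) * ((p:ℂ) * τ) ^ (-k) * f (-1 / ((p:ℂ) * τ))

def IsGamma0Invariant (p : ℕ) [Fact p.Prime] (k : ℤ) (f : ℂ → ℂ) : Prop :=
  ∀ A : Matrix.SpecialLinearGroup (Fin 2) ℤ, (p:ℤ) ∣ A.1 1 0 →
    ∀ τ : ℂ, 0 < τ.im →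
      f (((A.1 0 0 : ℂ) * τ + (A.1 0 1 : ℂ)) / ((A.1 1 0 : ℂ) * τ + (A.1 1 1 : ℂ))) =
        (legendreSym p (A.1 1 1) : ℂ) * ((A.1 1 0 : ℂ) * τ + (A.1 1 1 : ℂ)) ^ k * f τ

structure MemA (p : ℕ) [Fact p.Prime] (k : ℤ) (f : ℂ → ℂ) (a : ℤ → ℂ) : Prop where
  holo : DifferentiableOn ℂ f {τ : ℂ | 0 < τ.im}
  transform : IsGamma0Invariant p k f
  expansion : ∀ τ : ℂ, 0 < τ.im → HasSum (fun n : ℤ => a n * e ((n:ℂ) * τ)) (f τ)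
  bddBelow : ∃ N : ℤ, ∀ n : ℤ, n < N → a n = 0
  cusp0 : ∃ b : ℤ → ℂ, (∀ τ : ℂ, 0 < τ.im →
      HasSum (fun n : ℤ => b n * e ((n:ℂ) * τ)) (slashW p k f τ)) ∧
    ∃ N : ℤ, ∀ n : ℤ, n < N → b n = 0

noncomputable def epsP (p : ℕ) : ℂ := if p % 4 = 1 then 1 else Complex.I

structure VVForm (p : ℕ) [Fact p.Prime] [NeZero p] (α k r : ℤ)
    (F : ZMod p → ℂ → ℂ) (a : ZMod p → ℤ → ℂ) : Prop where
  holo : ∀ γ : ZMod p, DifferentiableOn ℂ (F γ) {τ : ℂ | 0 < τ.im}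
  transT : ∀ (γ : ZMod p) (τ : ℂ), 0 < τ.im →
    F γ (τ + 1) = e ((α:ℂ) * (γ.val:ℂ)^2 / (p:ℂ)) * F γ τ
  transS : ∀ (γ : ZMod p) (τ : ℂ), 0 < τ.im →
    F γ (-1/τ) = τ ^ k * (Complex.I ^ (-(r/2)) / (Real.sqrt p : ℂ)) *
      ∑ δ : ZMod p, e (-(2 * (α:ℂ) * (γ.val:ℂ) * (δ.val:ℂ)) / (p:ℂ)) * F δ τ
  expansion : ∀ (γ : ZMod p) (τ : ℂ), 0 < τ.im →
    HasSum (fun n : ℤ => a γ n * e ((n:ℂ) * τ / (p:ℂ))) (F γ τ)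
  support : ∀ (γ : ZMod p) (n : ℤ), (n : ZMod p) ≠ (α : ZMod p) * γ^2 → a γ n = 0
  bddBelow : ∀ γ : ZMod p, ∃ N : ℤ, ∀ n : ℤ, n < N → a γ n = 0


lemma e_add (x y : ℂ) : e (x + y) = e x * e y := by
  simp [e, mul_add, Complex.exp_add]

lemma e_int (m : ℤ) : e m = 1 := by
  rw [e, show 2 * (Real.pi:ℂ) * Complex.I * m = m * (2 * Real.pi * Complex.I) by ring,
    Complex.exp_int_mul_two_pi_mul_I]

lemma e_pow (x : ℂ) (n : ℕ) : e x ^ n = e (n * x) := by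
  rw [e, e, ← Complex.exp_nat_mul]; ring_nf

lemma sum_e (p : ℕ) [NeZero p] (m : ℤ) :
    ∑ δ : ZMod p, e ((m:ℂ) * ((δ.val : ℕ):ℂ) / p) = if (p:ℤ) ∣ m then (p:ℂ) else 0 := by
  have hp : (p:ℂ) ≠ 0 := Nat.cast_ne_zero.2 (NeZero.ne p)
  have hterm : ∀ δ : ZMod p, e ((m:ℂ) * ((δ.val:ℕ):ℂ) / p) = e ((m:ℂ)/p) ^ δ.val := by
    intro δ; rw [e_pow]; ring_nf
  simp_rw [hterm]
  have hsum : ∑ δ : ZMod p, (e ((m:ℂ)/p)) ^ δ.val = ∑ j ∈ Finset.range p, e ((m:ℂ)/p) ^ j := by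
    refine Finset.sum_nbij' (fun δ => δ.val) (fun j => (j : ZMod p)) ?_ ?_ ?_ ?_ ?_
    · intro δ _; exact Finset.mem_range.2 δ.val_lt
    · intro j _; exact Finset.mem_univ _
    · intro δ _; simp [ZMod.natCast_val, ZMod.cast_id]
    · intro j hj; exact ZMod.val_cast_of_lt (Finset.mem_range.1 hj)
    · intro δ _; rfl
  rw [hsum]
  by_cases h : (p:ℤ) ∣ m
  · obtain ⟨t, rfl⟩ := h
    have h1 : ((p:ℂ) * (t:ℤ)) / p = ((t:ℤ):ℂ) := by field_simp
    rw [if_pos ⟨t, rfl⟩]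
    push_cast
    rw [h1]
    simp [e_int]
  · have hζ : e ((m:ℂ)/p) ≠ 1 := by
      intro hone
      rw [e, Complex.exp_eq_one_iff] at hone
      obtain ⟨n, hn⟩ := hone
      have h2 : (2 * (Real.pi:ℂ) * Complex.I) ≠ 0 := by
        simp [Real.pi_ne_zero, Complex.I_ne_zero]
      have h3 : (m:ℂ)/p = n := mul_left_cancel₀ h2 (by rw [hn]; ring)
      rw [div_eq_iff hp] at h3
      have h4 : m = n * p := by exact_mod_cast h3
      exact h ⟨n, by linarith⟩
    rw [if_neg h, geom_sum_eq hζ]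
    have hp1 : e ((m:ℂ)/p) ^ p = 1 := by
      rw [e_pow, mul_div_cancel₀ _ hp, e_int]
    rw [hp1, sub_self, zero_div]

lemma innerCharSum (p : ℕ) [Fact p.Prime] [NeZero p] (hp : Odd p) (α : ℤ) (hα : ¬(p:ℤ) ∣ α)
    (γ ε : ZMod p) :
    ∑ δ : ZMod p, e (-(2 * (α:ℂ) * (γ.val:ℂ) * (δ.val:ℂ)) / p) *
        e (-(2 * (α:ℂ) * (δ.val:ℂ) * (ε.val:ℂ)) / p)
    = if ε = -γ then (p:ℂ) else 0 := by
  have hterm : ∀ δ : ZMod p,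
      e (-(2*(α:ℂ)*(γ.val:ℂ)*(δ.val:ℂ))/p) * e (-(2*(α:ℂ)*(δ.val:ℂ)*(ε.val:ℂ))/p)
      = e (((-(2*α*((γ.val:ℤ)+(ε.val:ℤ))) : ℤ):ℂ) * ((δ.val:ℕ):ℂ) / p) := by
    intro δ; rw [← e_add]; congr 1; push_cast; ring
  rw [Finset.sum_congr rfl (fun δ _ => hterm δ), sum_e]
  have hdvd : (p:ℤ) ∣ -(2*α*((γ.val:ℤ)+(ε.val:ℤ))) ↔ ε = -γ := by
    have hprime : Prime (p:ℤ) := Nat.prime_iff_prime_int.mp (Fact.out : p.Prime)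
    rw [dvd_neg, hprime.dvd_mul, hprime.dvd_mul]
    have h2 : ¬ (p:ℤ) ∣ 2 := by
      intro hd
      have hd2 : p ∣ 2 := by exact_mod_cast hd
      have := Nat.le_of_dvd (by norm_num) hd2
      have := (Fact.out : p.Prime).two_le
      have hodd := Nat.odd_iff.1 hp
      omega
    have h3 : (p:ℤ) ∣ ((γ.val:ℤ)+(ε.val:ℤ)) ↔ ε = -γ := by
      rw [show (γ.val:ℤ)+(ε.val:ℤ) = ((γ.val + ε.val : ℕ) : ℤ) by push_cast; ring,
        Int.natCast_dvd_natCast, ← ZMod.natCast_eq_zero_iff]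
      push_cast
      rw [ZMod.natCast_val, ZMod.natCast_val, ZMod.cast_id, ZMod.cast_id]
      constructor
      · intro h; linear_combination h
      · intro h; linear_combination h
    simp only [h2, hα, h3, false_or]
  rw [if_congr hdvd rfl rfl]


lemma neg_one_div_im {τ : ℂ} (h : 0 < τ.im) : 0 < (-1/τ).im := by
  have hτ : τ ≠ 0 := by intro h0; rw [h0] at h; simp at h
  rw [div_eq_mul_inv, neg_one_mul, Complex.neg_im, Complex.inv_im, neg_div, neg_neg]
  have hn : 0 < Complex.normSq τ := Complex.normSq_pos.2 hτ
  positivity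

lemma const_one (p : ℕ) (hp : 0 < p) (r k : ℤ) (hr : 2 ∣ r) (hk : k % 2 = (r/2) % 2)
    (τ : ℂ) (hτ : τ ≠ 0) :
    (-1/τ)^k * (Complex.I ^ (-(r/2)) / (Real.sqrt p : ℂ)) *
      (τ^k * (Complex.I ^ (-(r/2)) / (Real.sqrt p : ℂ))) * p = 1 := by
  obtain ⟨s, rfl⟩ := hr
  have hs2 : (2*s)/2 = s := by omega
  rw [hs2] at hk ⊢
  have hzτ : (-1/τ)^k * τ^k = (-1:ℂ)^k := by
    rw [← mul_zpow]; congr 1; field_simp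
  have hI : Complex.I^(-s) * Complex.I^(-s) = ((-1:ℂ))^(-s) := by
    rw [← zpow_add₀ Complex.I_ne_zero, show -s + -s = 2*(-s) by ring, zpow_mul,
      show (Complex.I:ℂ)^(2:ℤ) = -1 by rw [zpow_two]; simp [Complex.I_mul_I]]
  have hsq : ((Real.sqrt p : ℂ)) * (Real.sqrt p : ℂ) = (p:ℂ) := by
    rw [← Complex.ofReal_mul, Real.mul_self_sqrt (by positivity)]
    norm_num
  have hsne : ((Real.sqrt p : ℂ)) ≠ 0 := by
    simp only [ne_eq, Complex.ofReal_eq_zero]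
    positivity
  calc (-1/τ)^k * (Complex.I ^ (-s) / (Real.sqrt p : ℂ)) *
      (τ^k * (Complex.I ^ (-s) / (Real.sqrt p : ℂ))) * p
      = ((-1/τ)^k * τ^k) * (Complex.I^(-s) * Complex.I^(-s)) *
        ((p:ℂ) / ((Real.sqrt p:ℂ) * (Real.sqrt p:ℂ))) := by ring
    _ = (-1:ℂ)^k * (-1:ℂ)^(-s) := by rw [hzτ, hI, hsq, div_self (by exact_mod_cast hp.ne')]; ring
    _ = (-1:ℂ)^(k + -s) := by rw [zpow_add₀ (by norm_num : (-1:ℂ) ≠ 0)]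
    _ = 1 := Even.neg_one_zpow (by rw [Int.even_iff]; omega)


/-- a nearly holomorphic vector valued modular form `F` satisfies
`F_γ = F_{-γ}` and is recovered from the coefficients
`c(n) = (1/2)·Σ_{αγ²≡n (p)} a(γ,n)` of the associated scalar form by the formulas
of the main theorem. -/
theorem statement6 (p : ℕ) [Fact p.Prime] [NeZero p] (hp : Odd p)
    (α r k : ℤ) (hα : ¬ (p:ℤ) ∣ α)
    (hr : 2 ∣ r) (hir : Complex.I ^ (r/2) = (legendreSym p α : ℂ) * epsP p)
    (hk : k % 2 = (r/2) % 2)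
    (F : ZMod p → ℂ → ℂ) (a : ZMod p → ℤ → ℂ) (hF : VVForm p α k r F a)
    (c : ℤ → ℂ)
    (hc : ∀ n : ℤ, c n = (1/2 : ℂ) *
      ∑ γ ∈ Finset.univ.filter (fun γ : ZMod p => (α : ZMod p) * γ^2 = (n : ZMod p)),
        a γ n) :
    (∀ (γ : ZMod p) (τ : ℂ), 0 < τ.im → F γ τ = F (-γ) τ) ∧
    (∀ τ : ℂ, 0 < τ.im →
      HasSum (fun n : ℤ => (if (n : ZMod p) = 0 then 2 * c n else 0) * e ((n:ℂ) * τ / (p:ℂ)))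
        (F 0 τ)) ∧
    (∀ γ : ZMod p, γ ≠ 0 → ∀ τ : ℂ, 0 < τ.im →
      HasSum (fun n : ℤ =>
          (if (n : ZMod p) = (α : ZMod p) * γ^2 then c n else 0) * e ((n:ℂ) * τ / (p:ℂ)))
        (F γ τ)) := by
  classical
  have hpprime : p.Prime := Fact.out
  have hppos : 0 < p := hpprime.pos
  have hαz : (α : ZMod p) ≠ 0 := by
    rw [Ne, ZMod.intCast_zmod_eq_zero_iff_dvd]; exact hα
  have h2z : (2 : ZMod p) ≠ 0 := by
    have : ¬ p ∣ 2 := by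
      intro hd
      have := Nat.le_of_dvd (by norm_num) hd
      have := hpprime.two_le
      have := Nat.odd_iff.1 hp
      omega
    rw [show (2 : ZMod p) = ((2:ℕ) : ZMod p) by norm_num, Ne,
      ZMod.natCast_eq_zero_iff]
    exact this
  -- Part (i)
  have hsym : ∀ (γ : ZMod p) (τ : ℂ), 0 < τ.im → F γ τ = F (-γ) τ := by
    intro γ τ hτim
    have hτ : τ ≠ 0 := by intro h0; rw [h0] at hτim; simp at hτim
    have hσ : 0 < (-1/τ).im := neg_one_div_im hτim
    have h1 := hF.transS γ (-1/τ) hσ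
    rw [show -1/(-1/τ) = τ by field_simp] at h1
    set C : ℂ := Complex.I ^ (-(r/2)) / (Real.sqrt p : ℂ) with hC
    have h2 : ∀ δ : ZMod p,
        e (-(2 * (α:ℂ) * (γ.val:ℂ) * (δ.val:ℂ)) / (p:ℂ)) * F δ (-1/τ)
        = e (-(2 * (α:ℂ) * (γ.val:ℂ) * (δ.val:ℂ)) / (p:ℂ)) *
          (τ ^ k * C * ∑ ε : ZMod p,
            e (-(2 * (α:ℂ) * (δ.val:ℂ) * (ε.val:ℂ)) / (p:ℂ)) * F ε τ) := by
      intro δ; rw [hF.transS δ τ hτim]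
    rw [Finset.sum_congr rfl (fun δ _ => h2 δ)] at h1
    have h3 : ∑ δ : ZMod p,
        e (-(2 * (α:ℂ) * (γ.val:ℂ) * (δ.val:ℂ)) / (p:ℂ)) *
          (τ ^ k * C * ∑ ε : ZMod p,
            e (-(2 * (α:ℂ) * (δ.val:ℂ) * (ε.val:ℂ)) / (p:ℂ)) * F ε τ)
        = τ ^ k * C * ∑ ε : ZMod p,
            (∑ δ : ZMod p, e (-(2 * (α:ℂ) * (γ.val:ℂ) * (δ.val:ℂ)) / (p:ℂ)) *
              e (-(2 * (α:ℂ) * (δ.val:ℂ) * (ε.val:ℂ)) / (p:ℂ))) * F ε τ := by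
      have h3a : ∀ δ : ZMod p,
          e (-(2 * (α:ℂ) * (γ.val:ℂ) * (δ.val:ℂ)) / (p:ℂ)) *
            (τ ^ k * C * ∑ ε : ZMod p,
              e (-(2 * (α:ℂ) * (δ.val:ℂ) * (ε.val:ℂ)) / (p:ℂ)) * F ε τ)
          = ∑ ε : ZMod p,
            e (-(2 * (α:ℂ) * (γ.val:ℂ) * (δ.val:ℂ)) / (p:ℂ)) *
              (τ ^ k * C * (e (-(2 * (α:ℂ) * (δ.val:ℂ) * (ε.val:ℂ)) / (p:ℂ)) * F ε τ)) := by
        intro δ; rw [Finset.mul_sum, Finset.mul_sum]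
      rw [Finset.sum_congr rfl fun δ _ => h3a δ, Finset.sum_comm, Finset.mul_sum]
      refine Finset.sum_congr rfl fun ε _ => ?_
      rw [Finset.sum_mul, Finset.mul_sum]
      exact Finset.sum_congr rfl fun δ _ => by ring
    rw [h3] at h1
    have h4 : ∑ ε : ZMod p,
        (∑ δ : ZMod p, e (-(2 * (α:ℂ) * (γ.val:ℂ) * (δ.val:ℂ)) / (p:ℂ)) *
          e (-(2 * (α:ℂ) * (δ.val:ℂ) * (ε.val:ℂ)) / (p:ℂ))) * F ε τ
        = (p:ℂ) * F (-γ) τ := by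
      rw [Finset.sum_congr rfl (fun ε _ => by
        rw [innerCharSum p hp α hα γ ε])]
      simp only [ite_mul, zero_mul]
      rw [Finset.sum_ite_eq' Finset.univ (-γ) (fun ε => (p:ℂ) * F ε τ)]
      simp
    rw [h4] at h1
    have h5 : (-1/τ)^k * C * (τ ^ k * C * ((p:ℂ) * F (-γ) τ))
        = ((-1/τ)^k * C * (τ^k * C) * p) * F (-γ) τ := by ring
    rw [h1, h5, hC, const_one p hppos r k hr hk τ hτ, one_mul]
  refine ⟨hsym, ?_, ?_⟩
  -- Part (ii)
  · intro τ hτ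
    have h := hF.expansion 0 τ hτ
    have hfun : (fun n : ℤ =>
        (if (n : ZMod p) = 0 then 2 * c n else 0) * e ((n:ℂ) * τ / (p:ℂ)))
        = fun n : ℤ => a 0 n * e ((n:ℂ) * τ / (p:ℂ)) := by
      funext n
      congr 1
      by_cases hn : (n : ZMod p) = 0
      · rw [if_pos hn, hc n]
        have hset : Finset.univ.filter
            (fun γ : ZMod p => (α : ZMod p) * γ^2 = (n : ZMod p)) = {0} := by
          ext γ
          simp only [Finset.mem_filter, Finset.mem_univ, true_and, Finset.mem_singleton, hn]
          constructor
          · intro hγ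
            rcases mul_eq_zero.1 hγ with h | h
            · exact absurd h hαz
            · exact pow_eq_zero_iff (by norm_num) |>.1 h
          · intro hγ; rw [hγ]; ring
        rw [hset, Finset.sum_singleton]; ring
      · rw [if_neg hn, hF.support 0 n (by simpa using hn)]
    rw [hfun]
    exact h
  -- Part (iii)
  · intro γ hγ τ hτ
    have h1 := hF.expansion γ τ hτ
    have h2 := hF.expansion (-γ) τ hτ
    rw [← hsym γ τ hτ] at h2
    have h3 := (h1.add h2).mul_left (1/2 : ℂ)
    rw [show (1/2:ℂ) * (F γ τ + F γ τ) = F γ τ by ring] at h3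
    have hne : γ ≠ -γ := by
      intro hγγ
      apply hγ
      have : (2 : ZMod p) * γ = 0 := by linear_combination hγγ
      rcases mul_eq_zero.1 this with h | h
      · exact absurd h h2z
      · exact h
    have hfun : (fun n : ℤ =>
        (if (n : ZMod p) = (α : ZMod p) * γ^2 then c n else 0) * e ((n:ℂ) * τ / (p:ℂ)))
        = fun n : ℤ => (1/2 : ℂ) * (a γ n * e ((n:ℂ) * τ / (p:ℂ))
            + a (-γ) n * e ((n:ℂ) * τ / (p:ℂ))) := by
      funext n
      by_cases hn : (n : ZMod p) = (α : ZMod p) * γ^2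
      · rw [if_pos hn, hc n]
        have hset : Finset.univ.filter
            (fun γ' : ZMod p => (α : ZMod p) * γ'^2 = (n : ZMod p)) = {γ, -γ} := by
          ext γ'
          simp only [Finset.mem_filter, Finset.mem_univ, true_and, Finset.mem_insert,
            Finset.mem_singleton, hn]
          constructor
          · intro hγ'
            have hsq : γ'^2 = γ^2 := mul_left_cancel₀ hαz hγ'
            have : (γ' - γ) * (γ' + γ) = 0 := by ring_nf; linear_combination hsq
            rcases mul_eq_zero.1 this with h | h
            · left; linear_combination h
            · right; linear_combination h
          · rintro (h | h) <;> rw [h] <;> ring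
        rw [hset, Finset.sum_pair hne]
        ring
      · rw [if_neg hn, hF.support γ n hn,
          hF.support (-γ) n (by rwa [neg_sq])]
        ring
    rw [hfun]
    exact h3
end

section
/- Let K = ℚ(√5) ⊂ ℝ with ring of integers O_K, nontrivial automorphism x ↦ x', and ε₀ = (1+√5)/2. Then {λ ∈ K : λ√5 ∈ O_K and λλ' = -1/5} = {±ε₀^{2n}/√5 : n ∈ ℤ}. -/
/-- Membership in `K = ℚ(√p) ⊂ ℝ`. -/
def inK (p : ℕ) (x : ℝ) : Prop := ∃ u v : ℚ, x = (u : ℝ) + (v : ℝ) * Real.sqrt p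

/-- Membership in the ring of integers `O_K` of `K = ℚ(√p)`. -/
def inOK (p : ℕ) (x : ℝ) : Prop := inK p x ∧ IsIntegral ℤ x

/-- Membership in the inverse different `d⁻¹ = {λ ∈ K : λ√p ∈ O_K}`. -/
def inDinv (p : ℕ) (x : ℝ) : Prop := inK p x ∧ inOK p (x * Real.sqrt p)

/-- The conjugation `x = u + v√p ↦ x' = u - v√p` of `K = ℚ(√p)` (extended by the
identity off `K`; on `K` it is well defined since `√p` is irrational). -/
noncomputable def conjK (p : ℕ) (x : ℝ) : ℝ := by
  classical
  exact if h : ∃ u v : ℚ, x = (u : ℝ) + (v : ℝ) * Real.sqrt p then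
    (h.choose : ℝ) - (h.choose_spec.choose : ℝ) * Real.sqrt p
  else x

/-!
If `λ ∈ d⁻¹` has norm `-1/5`, then `μ = λ√5` is an algebraic integer of norm `1`, and conversely.
Writing `μ = u + v√5`, its conjugate is integral too, so the trace `2u` is an integer; with the
norm equation and a parity argument this puts `μ` in `ℤ[φ] = O_K`, so `μ` is a unit of norm one.
These units are exactly `±φ^{2n}`: a power of `φ²` moves a positive one into `[1, φ²)`, and the
only unit of norm one there is `1`.
-/

open Polynomial Real
open scoped goldenRatio

theorem exists_intCast_eq_of_prime_mul_sq_eq {p : ℕ} (hp : p.Prime) {r : ℚ} {k : ℤ}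
    (h : p * r ^ 2 = k) : ∃ n : ℤ, (n : ℚ) = r := by
  obtain ⟨w, hw⟩ : ∃ w : ℤ, (w : ℚ) = p * r := by
    have hden : ((p * r) ^ 2).den = 1 := by
      rw [show (p * r) ^ 2 = ((p * k : ℤ) : ℚ) by push_cast; linear_combination (p : ℚ) * h]
      exact Rat.den_intCast _
    rw [Rat.den_pow, pow_eq_one_iff_left two_ne_zero] at hden
    exact ⟨_, Rat.coe_int_num_of_den_eq_one hden⟩
  have hw2 : w ^ 2 = p * k := by
    have : ((w ^ 2 : ℤ) : ℚ) = ((p * k : ℤ) : ℚ) := by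
      push_cast; rw [hw]; linear_combination (p : ℚ) * h
    exact_mod_cast this
  obtain ⟨n, rfl⟩ : (p : ℤ) ∣ w :=
    (Nat.prime_iff_prime_int.mp hp).dvd_of_dvd_pow (Dvd.intro k hw2.symm)
  refine ⟨n, mul_left_cancel₀ (Nat.cast_ne_zero.mpr hp.ne_zero : (p : ℚ) ≠ 0) ?_⟩
  exact_mod_cast hw

theorem two_dvd_sub_of_sq_sub_five_mul_sq_eq_four {m n : ℤ} (h : m ^ 2 - 5 * n ^ 2 = 4) :
    2 ∣ m - n := by
  have hsq : Even (m ^ 2 - n ^ 2) := ⟨2 + 2 * n ^ 2, by linear_combination h⟩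
  rw [← even_iff_two_dvd, Int.even_sub]
  simpa [Int.even_sub, Int.even_pow] using hsq

section QuadraticField

variable {p : ℕ}

theorem rat_add_rat_mul_sqrt_inj (hp : Irrational √(p : ℝ)) {u v u' v' : ℚ}
    (h : (u : ℝ) + v * √p = u' + v' * √p) : u = u' ∧ v = v' := by
  obtain rfl : v = v' := by
    by_contra hv
    refine (hp.ratCast_mul (sub_ne_zero.mpr hv)).ne_rat (u' - u) ?_
    push_cast
    linear_combination h
  exact ⟨by exact_mod_cast add_right_cancel h, rfl⟩

theorem conjK_rat_add_rat_mul_sqrt (hp : Irrational √(p : ℝ)) (u v : ℚ) :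
    conjK p (u + v * √p) = u - v * √p := by
  have hK : ∃ u' v' : ℚ, (u : ℝ) + v * √p = u' + v' * √p := ⟨u, v, rfl⟩
  rw [conjK, dif_pos hK]
  obtain ⟨hu, hv⟩ := rat_add_rat_mul_sqrt_inj hp hK.choose_spec.choose_spec
  exact congrArg₂ (fun s t : ℚ => (s : ℝ) - t * √p) hu.symm hv.symm

theorem exists_aeval_rat_add_rat_mul_sqrt (P : ℤ[X]) (u v : ℚ) :
    ∃ A B : ℚ, aeval ((u : ℝ) + v * √p) P = A + B * √p ∧
      aeval ((u : ℝ) - v * √p) P = A - B * √p := by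
  have hsq : √(p : ℝ) ^ 2 = p := sq_sqrt (Nat.cast_nonneg p)
  induction P using Polynomial.induction_on with
  | C c => exact ⟨c, 0, by simp, by simp⟩
  | add P Q hP hQ =>
    obtain ⟨A, B, hP₁, hP₂⟩ := hP
    obtain ⟨A', B', hQ₁, hQ₂⟩ := hQ
    refine ⟨A + A', B + B', ?_, ?_⟩
    · rw [map_add, hP₁, hQ₁]; push_cast; ring
    · rw [map_add, hP₂, hQ₂]; push_cast; ring
  | monomial n c h =>
    obtain ⟨A, B, h₁, h₂⟩ := h
    refine ⟨u * A + p * v * B, u * B + v * A, ?_, ?_⟩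
    · rw [pow_succ, ← mul_assoc, map_mul, h₁, aeval_X]
      push_cast; linear_combination (v * B : ℝ) * hsq
    · rw [pow_succ, ← mul_assoc, map_mul, h₂, aeval_X]
      push_cast; linear_combination (v * B : ℝ) * hsq

theorem IsIntegral.rat_sub_rat_mul_sqrt (hp : Irrational √(p : ℝ)) {u v : ℚ}
    (h : IsIntegral ℤ ((u : ℝ) + v * √p)) : IsIntegral ℤ ((u : ℝ) - v * √p) := by
  obtain ⟨P, hmonic, hP⟩ := h
  obtain ⟨A, B, h₁, h₂⟩ := exists_aeval_rat_add_rat_mul_sqrt P u v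
  rw [← aeval_def, h₁] at hP
  obtain ⟨rfl, rfl⟩ := rat_add_rat_mul_sqrt_inj hp (u' := 0) (v' := 0) (by simpa using hP)
  exact ⟨P, hmonic, by rw [← aeval_def, h₂]; simp⟩

theorem exists_intCast_eq_two_mul_of_isIntegral (hp : Irrational √(p : ℝ)) {u v : ℚ}
    (h : IsIntegral ℤ ((u : ℝ) + v * √p)) : ∃ m : ℤ, (m : ℚ) = 2 * u := by
  have htrace : IsIntegral ℤ (algebraMap ℚ ℝ (2 * u)) := by
    have hsum : algebraMap ℚ ℝ (2 * u) = (u + v * √p) + (u - v * √p) := by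
      rw [eq_ratCast]; push_cast; ring
    exact hsum ▸ h.add (h.rat_sub_rat_mul_sqrt hp)
  rw [isIntegral_algebraMap_iff (algebraMap ℚ ℝ).injective,
    IsIntegrallyClosed.isIntegral_iff] at htrace
  simpa using htrace

end QuadraticField

/-- `ℤ[φ]` is the ring of integers of `ℚ(√5)`, and `a ^ 2 + a * b - b ^ 2` is the norm
`(a + bφ)(a + bψ)` of `a + bφ`. -/
def IsNormOneUnit (μ : ℝ) : Prop :=
  ∃ a b : ℤ, a ^ 2 + a * b - b ^ 2 = 1 ∧ μ = a + b * φ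

theorem intCast_add_mul_goldenRatio_mul_goldenConj (a b : ℤ) :
    (a + b * φ) * (a + b * ψ) = ((a ^ 2 + a * b - b ^ 2 : ℤ) : ℝ) := by
  push_cast
  linear_combination
    (a * b : ℝ) * goldenRatio_add_goldenConj + (b ^ 2 : ℝ) * goldenRatio_mul_goldenConj

theorem isIntegral_goldenRatio : IsIntegral ℤ φ :=
  ⟨X ^ 2 - X - 1, by monicity!, by simp [goldenRatio_sq]⟩

namespace IsNormOneUnit

variable {μ ν : ℝ}

theorem mul (hμ : IsNormOneUnit μ) (hν : IsNormOneUnit ν) : IsNormOneUnit (μ * ν) := by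
  obtain ⟨a, b, hab, rfl⟩ := hμ
  obtain ⟨c, d, hcd, rfl⟩ := hν
  refine ⟨a * c + b * d, a * d + b * c + b * d, ?_, ?_⟩
  · linear_combination (c ^ 2 + c * d - d ^ 2) * hab + hcd
  · push_cast; linear_combination (b * d : ℝ) * goldenRatio_sq

theorem neg (hμ : IsNormOneUnit μ) : IsNormOneUnit (-μ) := by
  obtain ⟨a, b, hab, rfl⟩ := hμ
  exact ⟨-a, -b, by linear_combination hab, by push_cast; ring⟩

theorem ne_zero (hμ : IsNormOneUnit μ) : μ ≠ 0 := by
  obtain ⟨a, b, hab, rfl⟩ := hμ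
  intro h0
  simpa [h0, hab] using intCast_add_mul_goldenRatio_mul_goldenConj a b

theorem isIntegral (hμ : IsNormOneUnit μ) : IsIntegral ℤ μ := by
  obtain ⟨a, b, -, rfl⟩ := hμ
  exact (isIntegral_intCast a).add ((isIntegral_intCast b).mul isIntegral_goldenRatio)

/-- The conjugate `μ' = μ⁻¹` lies in `(φ⁻², 1]`, so `μ - μ' = b√5` lies in `[0, √5)`,
forcing `b = 0`. -/
theorem eq_one_of_mem_Ico (hμ : IsNormOneUnit μ) (h₁ : 1 ≤ μ) (h₂ : μ < φ ^ 2) : μ = 1 := by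
  obtain ⟨a, b, hab, rfl⟩ := hμ
  have hnorm := intCast_add_mul_goldenRatio_mul_goldenConj a b
  rw [hab, Int.cast_one] at hnorm
  have hdiff : (a + b * φ) - (a + b * ψ) = b * √5 := by
    rw [← goldenRatio_sub_goldenConj]; ring
  have hψφ : ψ ^ 2 * φ ^ 2 = 1 := by
    rw [← mul_pow, goldenConj_mul_goldenRatio]; norm_num
  have hsqrt5 : φ ^ 2 - ψ ^ 2 = √5 := by
    rw [sq_sub_sq, goldenRatio_add_goldenConj, goldenRatio_sub_goldenConj, one_mul]
  have h5 : 0 < √5 := by positivity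
  have hb : b = 0 := by
    have hconj_le : (a + b * ψ : ℝ) ≤ 1 := by nlinarith
    have hconj_pos : (0 : ℝ) < a + b * ψ := by nlinarith
    have hψ2 : 0 < ψ ^ 2 := sq_pos_of_neg goldenConj_neg
    have hconj_gt : ψ ^ 2 < a + b * ψ := by
      nlinarith [mul_pos (mul_pos hψ2 hconj_pos) (sub_pos.2 h₂)]
    have hlo : (0 : ℝ) ≤ b := by nlinarith
    have hhi : (b : ℝ) < 1 := by nlinarith
    have hlo' : (0 : ℤ) ≤ b := by exact_mod_cast hlo
    have hhi' : b < 1 := by exact_mod_cast hhi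
    omega
  subst hb
  simp only [Int.cast_zero, zero_mul, add_zero] at hnorm h₁ ⊢
  nlinarith

end IsNormOneUnit

theorem isNormOneUnit_goldenRatio_zpow_two_mul (k : ℤ) : IsNormOneUnit (φ ^ (2 * k)) := by
  have hsq : IsNormOneUnit (φ ^ 2) := ⟨1, 1, by norm_num, by push_cast; rw [goldenRatio_sq]; ring⟩
  have hsq_inv : IsNormOneUnit (φ ^ 2)⁻¹ := by
    refine ⟨2, -1, by norm_num, ?_⟩
    rw [← inv_pow, inv_goldenRatio, neg_sq, goldenConj_sq]
    push_cast
    linear_combination goldenRatio_add_goldenConj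
  rw [zpow_mul, zpow_ofNat]
  induction k using Int.induction_on with
  | zero => exact ⟨1, 0, by norm_num, by simp⟩
  | succ k ih => rw [zpow_add_one₀ (by positivity)]; exact ih.mul hsq
  | pred k ih => rw [zpow_sub_one₀ (by positivity)]; exact ih.mul hsq_inv

theorem IsNormOneUnit.exists_eq_goldenRatio_zpow {μ : ℝ} (hμ : IsNormOneUnit μ) (hpos : 0 < μ) :
    ∃ k : ℤ, μ = φ ^ (2 * k) := by
  have hφ2 : 1 < φ ^ 2 := one_lt_pow₀ one_lt_goldenRatio two_ne_zero
  obtain ⟨k, hk₁, hk₂⟩ := exists_mem_Ico_zpow hpos hφ2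
  have hpow : φ ^ (2 * k) = (φ ^ 2) ^ k := by rw [zpow_mul, zpow_ofNat]
  have hpow_pos : 0 < (φ ^ 2) ^ k := by positivity
  have hreduced : μ * φ ^ (2 * -k) = 1 := by
    refine (hμ.mul (isNormOneUnit_goldenRatio_zpow_two_mul (-k))).eq_one_of_mem_Ico ?_ ?_ <;>
      rw [mul_neg, zpow_neg, hpow, ← div_eq_mul_inv]
    · rwa [le_div_iff₀ hpow_pos, one_mul]
    · rwa [div_lt_iff₀ hpow_pos, ← zpow_one_add₀ (zero_lt_one.trans hφ2).ne', add_comm]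
  refine ⟨k, ?_⟩
  rw [mul_neg, zpow_neg, ← div_eq_mul_inv, div_eq_one_iff_eq (by positivity)] at hreduced
  exact hreduced

theorem isNormOneUnit_iff {μ : ℝ} :
    IsNormOneUnit μ ↔ ∃ k : ℤ, μ = φ ^ (2 * k) ∨ μ = -φ ^ (2 * k) := by
  constructor
  · intro hμ
    rcases hμ.ne_zero.lt_or_gt with hneg | hpos
    · obtain ⟨k, hk⟩ := hμ.neg.exists_eq_goldenRatio_zpow (neg_pos.mpr hneg)
      exact ⟨k, Or.inr (by rw [← hk, neg_neg])⟩
    · obtain ⟨k, hk⟩ := hμ.exists_eq_goldenRatio_zpow hpos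
      exact ⟨k, Or.inl hk⟩
  · rintro ⟨k, rfl | rfl⟩
    exacts [isNormOneUnit_goldenRatio_zpow_two_mul k,
      (isNormOneUnit_goldenRatio_zpow_two_mul k).neg]

theorem conjK_five (u v : ℚ) : conjK 5 (u + v * √5) = u - v * √5 := by
  simpa using conjK_rat_add_rat_mul_sqrt Nat.prime_five.irrational_sqrt u v

theorem IsNormOneUnit.of_isIntegral {u v : ℚ} (hint : IsIntegral ℤ ((u : ℝ) + v * √5))
    (hnorm : u ^ 2 - 5 * v ^ 2 = 1) : IsNormOneUnit (u + v * √5) := by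
  obtain ⟨m, hm⟩ := exists_intCast_eq_two_mul_of_isIntegral (p := 5)
    Nat.prime_five.irrational_sqrt (by simpa using hint)
  obtain ⟨n, hn⟩ := exists_intCast_eq_of_prime_mul_sq_eq Nat.prime_five (r := 2 * v)
    (k := m ^ 2 - 4) (by push_cast; linear_combination -((m : ℚ) + 2 * u) * hm - 4 * hnorm)
  have hmn : m ^ 2 - 5 * n ^ 2 = 4 := by
    have : ((m ^ 2 - 5 * n ^ 2 : ℤ) : ℚ) = 4 := by
      push_cast; rw [hm, hn]; linear_combination 4 * hnorm
    exact_mod_cast this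
  obtain ⟨a, ha⟩ := two_dvd_sub_of_sq_sub_five_mul_sq_eq_four hmn
  refine ⟨a, n, mul_left_cancel₀ four_ne_zero
    (by linear_combination hmn - (2 * a + n + m) * ha), ?_⟩
  have hm' : (m : ℝ) = 2 * u := by exact_mod_cast hm
  have hn' : (n : ℝ) = 2 * v := by exact_mod_cast hn
  have ha' : (m : ℝ) - n = 2 * a := by exact_mod_cast ha
  unfold goldenRatio
  linear_combination (-1 / 2 : ℝ) * hm' + (-√5 / 2) * hn' + (1 / 2 : ℝ) * ha'

theorem inDinv_five_and_mul_conjK_iff (x : ℝ) :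
    inDinv 5 x ∧ x * conjK 5 x = -(1 / 5) ↔ IsNormOneUnit (x * √5) := by
  have hsq : √(5 : ℝ) ^ 2 = 5 := sq_sqrt (by norm_num)
  constructor
  · rintro ⟨⟨⟨u, v, rfl⟩, -, hint⟩, hnorm⟩
    rw [Nat.cast_ofNat, conjK_five] at hnorm
    have hnorm' : (5 * v) ^ 2 - 5 * u ^ 2 = (1 : ℚ) := by
      have : (((5 * v) ^ 2 - 5 * u ^ 2 : ℚ) : ℝ) = 1 := by
        push_cast; linear_combination -5 * hnorm - 5 * (v : ℝ) ^ 2 * hsq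
      exact_mod_cast this
    have hμ : ((u : ℝ) + v * √5) * √5 = ((5 * v : ℚ) : ℝ) + u * √5 := by
      push_cast; linear_combination (v : ℝ) * hsq
    simp only [Nat.cast_ofNat] at hint ⊢
    rw [hμ] at hint ⊢
    exact .of_isIntegral hint hnorm'
  · intro hμ
    obtain ⟨a, b, hab, hx⟩ := id hμ
    have hab' : (a : ℝ) ^ 2 + a * b - b ^ 2 = 1 := by exact_mod_cast hab
    have hx' : x = ((b / 2 : ℚ) : ℝ) + ((2 * a + b) / 10 : ℚ) * √5 := by
      refine mul_right_cancel₀ (by positivity : √(5 : ℝ) ≠ 0) (hx.trans ?_)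
      unfold goldenRatio
      push_cast
      linear_combination (-(2 * a + b) / 10 : ℝ) * hsq
    refine ⟨⟨⟨_, _, by rw [Nat.cast_ofNat]; exact hx'⟩,
      ⟨⟨(2 * a + b) / 2, b / 2, ?_⟩, by rw [Nat.cast_ofNat]; exact hμ.isIntegral⟩⟩, ?_⟩
    · rw [Nat.cast_ofNat, hx]
      unfold goldenRatio
      push_cast
      ring
    · rw [hx', conjK_five]
      push_cast
      linear_combination (-1 / 5 : ℝ) * hab' - (((2 * a + b) / 10) : ℝ) ^ 2 * hsq

/-- in `K = ℚ(√5)`, the set of `λ ∈ d⁻¹` of norm `λλ' = -1/5` is exactly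
`{± ε₀^{2n}/√5 : n ∈ ℤ}` where `ε₀ = (1+√5)/2`. -/
theorem statement13 :
    {x : ℝ | inDinv 5 x ∧ x * conjK 5 x = -(1/5)} =
      {x : ℝ | ∃ n : ℤ, x = ((1 + Real.sqrt 5) / 2) ^ (2 * n) / Real.sqrt 5 ∨
        x = -(((1 + Real.sqrt 5) / 2) ^ (2 * n) / Real.sqrt 5)} := by
  ext x
  have hsqrt5 : √(5 : ℝ) ≠ 0 := by positivity
  rw [Set.mem_ofPred_eq, Set.mem_ofPred_eq, inDinv_five_and_mul_conjK_iff, isNormOneUnit_iff]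
  simp only [← neg_div, eq_div_iff hsqrt5]
end
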